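/- arXiv:2605.07410 — 2 statements merged into one kernel-verified Lean document; each statement's English description precedes it below -/
import Mathlib

section
/- Let V be a finite-dimensional complex inner product space, let H' and B be self-adjoint linear endomorphisms of V, let M ∈ ℝ be such that every eigenvalue of H' is strictly greater than −M, and let S > 0. Define the energy-truncated operator H̄' := H'·E^{H'}((−M,M)) + M·E^{H'}([M,∞)). Assume that for every s ∈ ℂ with |s| < S, ‖e^{sH'}·B·e^{−sH'}‖ ≤ ‖B‖/(1 − |s|/S). Then for every s ∈ ℂ with |s| < S, ‖e^{sH̄'}·B·e^{−sH̄'}‖ ≤ 2‖B‖ + ‖B‖/(1 − |s|/S). -/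
/-!
Diagonalise `H'` in an orthonormal eigenbasis with eigenvalues `μᵢ > -M`; then `H̄'` is diagonal in
the same basis with eigenvalues `min μᵢ M`, and `P + Q = 1` for `P = E((-M,M))`, `Q = E([M,∞))`.
For `Re s ≥ 0` we have `e^{-sH̄'} P = e^{-sH'} P` and `e^{-sH̄'} Q = e^{-sM} Q`, so
`e^{sH̄'} B e^{-sH̄'} = (e^{sH̄'} e^{-sH'}) (e^{sH'} B e^{-sH'}) P + (e^{-sM} e^{sH̄'}) B Q`,
and both bracketed factors are diagonal with entries `e^{s(min μᵢ M - μᵢ)}`, `e^{s(min μᵢ M - M)}`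
of modulus at most `1`. For `Re s ≤ 0` the mirror-image splitting `(P + Q) e^{sH̄'} B e^{-sH̄'}`
works.
-/

/-- The spectral projection `E^T(I)` of an endomorphism `T` of a finite-dimensional
complex inner product space: the orthogonal projection onto the span of all
eigenvectors of `T` whose eigenvalue lies in `I ⊆ ℝ`. -/
noncomputable def specProj {V : Type*} [NormedAddCommGroup V] [InnerProductSpace ℂ V]
    [FiniteDimensional ℂ V] (T : V →L[ℂ] V) (I : Set ℝ) : V →L[ℂ] V :=
  (⨆ μ ∈ I, Module.End.eigenspace (↑T : V →ₗ[ℂ] V) (μ : ℂ)).subtypeL.comp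
    (Submodule.orthogonalProjectionOnto (⨆ μ ∈ I, Module.End.eigenspace (↑T : V →ₗ[ℂ] V) (μ : ℂ)))

/-- The energy-truncated operator `T̄ := T·E^T((−M,M)) + M·E^T([M,∞))`. -/
noncomputable def etrunc {V : Type*} [NormedAddCommGroup V] [InnerProductSpace ℂ V]
    [FiniteDimensional ℂ V] (T : V →L[ℂ] V) (M : ℝ) : V →L[ℂ] V :=
  T * specProj T (Set.Ioo (-M) M) + (M : ℂ) • specProj T (Set.Ici M)

open Module Set

theorem ContinuousLinearMap.exp_apply_of_apply_eq_smul {V : Type*} [NormedAddCommGroup V]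
    [NormedSpace ℂ V] [CompleteSpace V] {A : V →L[ℂ] V} {c : ℂ} {x : V} (h : A x = c • x) :
    NormedSpace.exp A x = Complex.exp c • x := by
  have hpow (n : ℕ) : (A ^ n) x = c ^ n • x := by
    induction n with
    | zero => simp
    | succ n ih => rw [pow_succ', mul_apply_eq_comp, ih, map_smul, h, smul_smul, pow_succ]
  have hA := (NormedSpace.exp_series_hasSum_exp' (𝕂 := ℂ) A).mapL (apply ℂ V x)
  have hc := (NormedSpace.exp_series_hasSum_exp' (𝕂 := ℂ) c).smul_const x
  simp only [apply_apply, smul_apply, hpow, smul_smul, smul_eq_mul] at hA hc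
  rw [Complex.exp_eq_exp_ℂ]
  exact hA.unique hc

theorem ContinuousLinearMap.exp_smul_apply_of_apply_eq_smul {V : Type*} [NormedAddCommGroup V]
    [NormedSpace ℂ V] [CompleteSpace V] {A : V →L[ℂ] V} {c : ℂ} {x : V} (h : A x = c • x)
    (t : ℂ) : NormedSpace.exp (t • A) x = Complex.exp (t * c) • x :=
  exp_apply_of_apply_eq_smul <| by rw [smul_apply, h, smul_smul]

theorem NormedSpace.exp_neg_mul_exp {𝕂 𝔸 : Type*} [RCLike 𝕂] [NormedRing 𝔸] [NormedAlgebra 𝕂 𝔸]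
    [CompleteSpace 𝔸] (x : 𝔸) : exp (-x) * exp x = 1 := by
  let : NormedAlgebra ℚ 𝔸 := NormedAlgebra.restrictScalars ℚ 𝕂 𝔸
  rw [← exp_add_of_commute (Commute.refl x).neg_left, neg_add_cancel, exp_zero]

section SpecProj

variable {V : Type*} [NormedAddCommGroup V] [InnerProductSpace ℂ V] [FiniteDimensional ℂ V]

theorem specProj_eq_starProjection (T : V →L[ℂ] V) (I : Set ℝ) :
    specProj T I = (⨆ μ ∈ I, End.eigenspace (T : V →ₗ[ℂ] V) (μ : ℂ)).starProjection :=
  rfl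

theorem norm_specProj_le (T : V →L[ℂ] V) (I : Set ℝ) : ‖specProj T I‖ ≤ 1 := by
  rw [specProj_eq_starProjection]
  exact Submodule.starProjection_norm_le _

theorem specProj_apply_of_mem {T : V →L[ℂ] V} {I : Set ℝ} {μ : ℝ} (hμ : μ ∈ I) {x : V}
    (hx : T x = (μ : ℂ) • x) : specProj T I x = x := by
  rw [specProj_eq_starProjection]
  exact Submodule.starProjection_eq_self_iff.mpr <|
    Submodule.mem_iSup_of_mem μ <| Submodule.mem_iSup_of_mem hμ <| End.mem_eigenspace_iff.mpr hx

theorem specProj_apply_of_notMem {T : V →L[ℂ] V} (hT : IsSelfAdjoint T) {I : Set ℝ} {μ : ℝ}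
    (hμ : μ ∉ I) {x : V} (hx : T x = (μ : ℂ) • x) : specProj T I x = 0 := by
  have hortho : End.eigenspace (T : V →ₗ[ℂ] V) (μ : ℂ) ⟂
      ⨆ ν ∈ I, End.eigenspace (T : V →ₗ[ℂ] V) (ν : ℂ) := by
    simp only [Submodule.isOrtho_iSup_right]
    intro ν hν
    refine hT.isSymmetric.orthogonalFamily_eigenspaces.isOrtho ?_
    exact fun h => hμ (Complex.ofReal_injective h ▸ hν)
  rw [specProj_eq_starProjection]
  exact (Submodule.starProjection_apply_eq_zero_iff _).mpr
    (Submodule.isOrtho_iff_le.mp hortho (End.mem_eigenspace_iff.mpr hx))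

end SpecProj

theorem OrthonormalBasis.ext_continuousLinearMap {ι 𝕜 E F : Type*} [Fintype ι] [RCLike 𝕜]
    [NormedAddCommGroup E] [InnerProductSpace 𝕜 E] [NormedAddCommGroup F] [NormedSpace 𝕜 F]
    (b : OrthonormalBasis ι 𝕜 E) {f g : E →L[𝕜] F} (h : ∀ i, f (b i) = g (b i)) : f = g :=
  ContinuousLinearMap.coe_injective <| b.toBasis.ext fun i => by simpa using h i

theorem OrthonormalBasis.opNorm_le_of_apply_eq_smul {ι 𝕜 E : Type*} [Fintype ι] [RCLike 𝕜]
    [NormedAddCommGroup E] [InnerProductSpace 𝕜 E] (b : OrthonormalBasis ι 𝕜 E)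
    {T : E →L[𝕜] E} {d : ι → 𝕜} (hT : ∀ i, T (b i) = d i • b i) {m : ℝ} (hm : 0 ≤ m)
    (hd : ∀ i, ‖d i‖ ≤ m) : ‖T‖ ≤ m := by
  refine T.opNorm_le_bound hm fun x => ?_
  have hcoord (j : ι) : inner 𝕜 (b j) (T x) = d j * inner 𝕜 (b j) x := by
    conv_lhs => rw [← b.sum_repr' x]
    simp only [map_sum, map_smul, hT, smul_smul]
    rw [b.orthonormal.inner_right_fintype, mul_comm]
  have hsq : ‖T x‖ ^ 2 ≤ (m * ‖x‖) ^ 2 := by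
    rw [mul_pow, ← b.sum_sq_norm_inner_right (T x), ← b.sum_sq_norm_inner_right x,
      Finset.mul_sum]
    gcongr with j
    rw [hcoord, norm_mul, mul_pow]
    gcongr
    exact hd j
  exact (pow_le_pow_iff_left₀ (norm_nonneg _) (by positivity) two_ne_zero).mp hsq

theorem norm_mul_mul_le_of_add_eq_one {𝕜 R : Type*} [CommSemiring 𝕜] [NormedRing R]
    [Algebra 𝕜 R] {B E E' F F' P Q : R} {c : 𝕜} (hPQ : P + Q = 1) (hE : E' * E = 1)
    (hP : F' * P = E' * P) (hQ : F' * Q = c • Q) (hFE : ‖F * E'‖ ≤ 1) (hcF : ‖c • F‖ ≤ 1)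
    (hPn : ‖P‖ ≤ 1) (hQn : ‖Q‖ ≤ 1) :
    ‖F * B * F'‖ ≤ ‖E * B * E'‖ + ‖B‖ := by
  have hsplit : F * B * F' = F * E' * (E * B * E') * P + c • F * B * Q := by
    calc F * B * F' = F * B * (F' * (P + Q)) := by rw [hPQ, mul_one]
      _ = F * (E' * E) * B * E' * P + c • F * B * Q := by
        simp only [mul_add, hP, hQ, hE, mul_one, mul_assoc, smul_mul_assoc, mul_smul_comm]
      _ = F * E' * (E * B * E') * P + c • F * B * Q := by simp only [mul_assoc]
  have hcontract {X Y Z : R} (hX : ‖X‖ ≤ 1) (hZ : ‖Z‖ ≤ 1) : ‖X * Y * Z‖ ≤ ‖Y‖ :=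
    norm_mul₃_le.trans <| (mul_le_of_le_one_right (by positivity) hZ).trans
      (mul_le_of_le_one_left (norm_nonneg _) hX)
  rw [hsplit]
  exact (norm_add_le _ _).trans (add_le_add (hcontract hFE hPn) (hcontract hcF hQn))

theorem norm_mul_mul_le_of_add_eq_one' {𝕜 R : Type*} [CommSemiring 𝕜] [NormedRing R]
    [Algebra 𝕜 R] {B E E' F F' P Q : R} {c : 𝕜} (hPQ : P + Q = 1) (hE : E' * E = 1)
    (hP : P * F = P * E) (hQ : Q * F = c • Q) (hEF : ‖E * F'‖ ≤ 1) (hcF : ‖c • F'‖ ≤ 1)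
    (hPn : ‖P‖ ≤ 1) (hQn : ‖Q‖ ≤ 1) :
    ‖F * B * F'‖ ≤ ‖E * B * E'‖ + ‖B‖ := by
  open MulOpposite in
  simpa only [← op_mul, ← op_smul, norm_op, mul_assoc] using
    norm_mul_mul_le_of_add_eq_one (B := op B) (E := op E') (E' := op E) (F := op F')
      (F' := op F) (P := op P) (Q := op Q) (c := c) (by rw [← op_add, hPQ, op_one])
      (by rw [← op_mul, hE, op_one]) (by rw [← op_mul, hP, op_mul])
      (by rw [← op_mul, hQ, op_smul]) (by rwa [← op_mul, norm_op]) (by rwa [← op_smul, norm_op])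
      (by rwa [norm_op]) (by rwa [norm_op])

theorem OrthonormalBasis.opNorm_le_one_of_apply_eq_exp_smul {ι E : Type*} [Fintype ι]
    [NormedAddCommGroup E] [InnerProductSpace ℂ E] (b : OrthonormalBasis ι ℂ E)
    {X : E →L[ℂ] E} {s : ℂ} {r : ι → ℝ} (hX : ∀ i, X (b i) = Complex.exp (s * r i) • b i)
    (hr : ∀ i, s.re * r i ≤ 0) : ‖X‖ ≤ 1 :=
  b.opNorm_le_of_apply_eq_smul hX zero_le_one fun i => by
    rw [Complex.norm_exp, Real.exp_le_one_iff, Complex.re_mul_ofReal]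
    exact hr i

section Eigenbasis

variable {V ι : Type*} [NormedAddCommGroup V] [InnerProductSpace ℂ V] [FiniteDimensional ℂ V]
  [Fintype ι] {T : V →L[ℂ] V} {b : OrthonormalBasis ι ℂ V} {μ : ι → ℝ} {M : ℝ}

theorem specProj_Ioo_apply_eigenbasis (hT : IsSelfAdjoint T)
    (hb : ∀ i, T (b i) = (μ i : ℂ) • b i) (hM : ∀ i, -M < μ i) (i : ι) :
    specProj T (Ioo (-M) M) (b i) = if μ i < M then b i else 0 := by
  split_ifs with h
  · exact specProj_apply_of_mem (I := Ioo (-M) M) ⟨hM i, h⟩ (hb i)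
  · exact specProj_apply_of_notMem hT (fun hi => h hi.2) (hb i)

theorem specProj_Ici_apply_eigenbasis (hT : IsSelfAdjoint T)
    (hb : ∀ i, T (b i) = (μ i : ℂ) • b i) (i : ι) :
    specProj T (Ici M) (b i) = if μ i < M then 0 else b i := by
  split_ifs with h
  · exact specProj_apply_of_notMem hT (not_le.mpr h) (hb i)
  · exact specProj_apply_of_mem (not_lt.mp h) (hb i)

theorem etrunc_apply_eigenbasis (hT : IsSelfAdjoint T)
    (hb : ∀ i, T (b i) = (μ i : ℂ) • b i) (hM : ∀ i, -M < μ i) (i : ι) :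
    etrunc T M (b i) = ((min (μ i) M : ℝ) : ℂ) • b i := by
  rw [etrunc, add_apply, mul_apply_eq_comp, smul_apply, specProj_Ioo_apply_eigenbasis hT hb hM,
    specProj_Ici_apply_eigenbasis hT hb]
  split_ifs with h
  · simp [hb i, min_eq_left h.le]
  · simp [min_eq_right (not_lt.mp h)]

theorem specProj_Ioo_add_specProj_Ici (hT : IsSelfAdjoint T)
    (hb : ∀ i, T (b i) = (μ i : ℂ) • b i) (hM : ∀ i, -M < μ i) :
    specProj T (Ioo (-M) M) + specProj T (Ici M) = 1 :=
  b.ext_continuousLinearMap fun i => by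
    rw [add_apply, specProj_Ioo_apply_eigenbasis hT hb hM, specProj_Ici_apply_eigenbasis hT hb]
    split_ifs <;> simp

theorem exp_smul_etrunc_apply_eigenbasis (hT : IsSelfAdjoint T)
    (hb : ∀ i, T (b i) = (μ i : ℂ) • b i) (hM : ∀ i, -M < μ i) (t : ℂ) (i : ι) :
    NormedSpace.exp (t • etrunc T M) (b i) = Complex.exp (t * (min (μ i) M : ℝ)) • b i :=
  ContinuousLinearMap.exp_smul_apply_of_apply_eq_smul (etrunc_apply_eigenbasis hT hb hM i) t

theorem norm_exp_etrunc_conj_le_of_re_nonneg (hT : IsSelfAdjoint T)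
    (hb : ∀ i, T (b i) = (μ i : ℂ) • b i) (hM : ∀ i, -M < μ i) (B : V →L[ℂ] V) {s : ℂ}
    (hs : 0 ≤ s.re) :
    ‖NormedSpace.exp (s • etrunc T M) * B * NormedSpace.exp ((-s) • etrunc T M)‖ ≤
      ‖NormedSpace.exp (s • T) * B * NormedSpace.exp ((-s) • T)‖ + ‖B‖ := by
  have hexp := fun t i => ContinuousLinearMap.exp_smul_apply_of_apply_eq_smul (hb i) t
  have hexp_trunc := exp_smul_etrunc_apply_eigenbasis hT hb hM
  have hE := (neg_smul s T).symm ▸ NormedSpace.exp_neg_mul_exp (𝕂 := ℂ) (s • T)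
  have hFE : ‖NormedSpace.exp (s • etrunc T M) * NormedSpace.exp ((-s) • T)‖ ≤ 1 := by
    refine b.opNorm_le_one_of_apply_eq_exp_smul (r := fun i => min (μ i) M - μ i) (fun i => ?_)
      fun i => mul_nonpos_of_nonneg_of_nonpos hs (by linarith [min_le_left (μ i) M])
    rw [mul_apply_eq_comp, hexp, map_smul, hexp_trunc, smul_smul, ← Complex.exp_add]
    congr 2
    push_cast
    ring
  have hcF : ‖Complex.exp (-s * M) • NormedSpace.exp (s • etrunc T M)‖ ≤ 1 := by
    refine b.opNorm_le_one_of_apply_eq_exp_smul (r := fun i => min (μ i) M - M) (fun i => ?_)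
      fun i => mul_nonpos_of_nonneg_of_nonpos hs (by linarith [min_le_right (μ i) M])
    rw [smul_apply, hexp_trunc, smul_smul, ← Complex.exp_add]
    congr 2
    push_cast
    ring
  refine norm_mul_mul_le_of_add_eq_one (c := Complex.exp (-s * M))
    (specProj_Ioo_add_specProj_Ici hT hb hM) hE ?_ ?_ hFE hcF (norm_specProj_le _ _)
    (norm_specProj_le _ _)
  · refine b.ext_continuousLinearMap fun i => ?_
    rw [mul_apply_eq_comp, mul_apply_eq_comp, specProj_Ioo_apply_eigenbasis hT hb hM]
    split_ifs with h
    · rw [hexp, hexp_trunc, min_eq_left h.le]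
    · simp
  · refine b.ext_continuousLinearMap fun i => ?_
    rw [mul_apply_eq_comp, smul_apply, specProj_Ici_apply_eigenbasis hT hb]
    split_ifs with h
    · simp
    · rw [hexp_trunc, min_eq_right (not_lt.mp h)]

theorem norm_exp_etrunc_conj_le_of_re_nonpos (hT : IsSelfAdjoint T)
    (hb : ∀ i, T (b i) = (μ i : ℂ) • b i) (hM : ∀ i, -M < μ i) (B : V →L[ℂ] V) {s : ℂ}
    (hs : s.re ≤ 0) :
    ‖NormedSpace.exp (s • etrunc T M) * B * NormedSpace.exp ((-s) • etrunc T M)‖ ≤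
      ‖NormedSpace.exp (s • T) * B * NormedSpace.exp ((-s) • T)‖ + ‖B‖ := by
  have hexp := fun t i => ContinuousLinearMap.exp_smul_apply_of_apply_eq_smul (hb i) t
  have hexp_trunc := exp_smul_etrunc_apply_eigenbasis hT hb hM
  have hE := (neg_smul s T).symm ▸ NormedSpace.exp_neg_mul_exp (𝕂 := ℂ) (s • T)
  have hEF : ‖NormedSpace.exp (s • T) * NormedSpace.exp ((-s) • etrunc T M)‖ ≤ 1 := by
    refine b.opNorm_le_one_of_apply_eq_exp_smul (r := fun i => μ i - min (μ i) M) (fun i => ?_)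
      fun i => mul_nonpos_of_nonpos_of_nonneg hs (by linarith [min_le_left (μ i) M])
    rw [mul_apply_eq_comp, hexp_trunc, map_smul, hexp, smul_smul, ← Complex.exp_add]
    congr 2
    push_cast
    ring
  have hcF : ‖Complex.exp (s * M) • NormedSpace.exp ((-s) • etrunc T M)‖ ≤ 1 := by
    refine b.opNorm_le_one_of_apply_eq_exp_smul (r := fun i => M - min (μ i) M) (fun i => ?_)
      fun i => mul_nonpos_of_nonpos_of_nonneg hs (by linarith [min_le_right (μ i) M])
    rw [smul_apply, hexp_trunc, smul_smul, ← Complex.exp_add]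
    congr 2
    push_cast
    ring
  refine norm_mul_mul_le_of_add_eq_one' (c := Complex.exp (s * M))
    (specProj_Ioo_add_specProj_Ici hT hb hM) hE ?_ ?_ hEF hcF (norm_specProj_le _ _)
    (norm_specProj_le _ _)
  · refine b.ext_continuousLinearMap fun i => ?_
    rw [mul_apply_eq_comp, mul_apply_eq_comp, hexp, hexp_trunc, map_smul, map_smul,
      specProj_Ioo_apply_eigenbasis hT hb hM]
    split_ifs with h
    · rw [min_eq_left h.le]
    · simp
  · refine b.ext_continuousLinearMap fun i => ?_
    rw [mul_apply_eq_comp, smul_apply, hexp_trunc, map_smul, specProj_Ici_apply_eigenbasis hT hb]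
    split_ifs with h
    · simp
    · rw [min_eq_right (not_lt.mp h)]

end Eigenbasis

theorem norm_exp_etrunc_conj_le {V : Type*} [NormedAddCommGroup V] [InnerProductSpace ℂ V]
    [FiniteDimensional ℂ V] {T : V →L[ℂ] V} (hT : IsSelfAdjoint T) {M : ℝ}
    (hM : ∀ μ : ℝ, End.HasEigenvalue (T : V →ₗ[ℂ] V) (μ : ℂ) → -M < μ) (B : V →L[ℂ] V) (s : ℂ) :
    ‖NormedSpace.exp (s • etrunc T M) * B * NormedSpace.exp (-(s • etrunc T M))‖ ≤
      ‖NormedSpace.exp (s • T) * B * NormedSpace.exp (-(s • T))‖ + ‖B‖ := by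
  have hT' := hT.isSymmetric
  have hb := hT'.apply_eigenvectorBasis rfl
  have hμ (i : Fin (finrank ℂ V)) := hM _ (hT'.hasEigenvalue_eigenvalues rfl i)
  simp only [← neg_smul]
  rcases le_total 0 s.re with hs | hs
  · exact norm_exp_etrunc_conj_le_of_re_nonneg hT hb hμ B hs
  · exact norm_exp_etrunc_conj_le_of_re_nonpos hT hb hμ B hs

theorem stmt_7_general {V : Type*} [NormedAddCommGroup V] [InnerProductSpace ℂ V]
    [FiniteDimensional ℂ V]
    (H' B : V →L[ℂ] V) (hH' : IsSelfAdjoint H')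
    (M : ℝ) (hM : ∀ μ : ℝ, Module.End.HasEigenvalue (↑H' : V →ₗ[ℂ] V) (μ : ℂ) → -M < μ)
    (S : ℝ)
    (hHad : ∀ s : ℂ, ‖s‖ < S →
      ‖NormedSpace.exp (s • H') * B * NormedSpace.exp (-(s • H'))‖ ≤
        ‖B‖ / (1 - ‖s‖ / S)) :
    ∀ s : ℂ, ‖s‖ < S →
      ‖NormedSpace.exp (s • etrunc H' M) * B * NormedSpace.exp (-(s • etrunc H' M))‖ ≤
        2 * ‖B‖ + ‖B‖ / (1 - ‖s‖ / S) := by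
  intro s hs
  linarith [norm_exp_etrunc_conj_le hH' hM B s, hHad s hs, norm_nonneg B]

/-- Truncated Hadamard bound: if every eigenvalue of `H'` is `> −M` and
`‖e^{sH'} B e^{−sH'}‖ ≤ ‖B‖/(1−|s|/S)` for `|s| < S`, then the energy-truncated
operator `H̄'` satisfies `‖e^{sH̄'} B e^{−sH̄'}‖ ≤ 2‖B‖ + ‖B‖/(1−|s|/S)`. -/
theorem stmt_7 {V : Type*} [NormedAddCommGroup V] [InnerProductSpace ℂ V]
    [FiniteDimensional ℂ V]
    (H' B : V →L[ℂ] V) (hH' : IsSelfAdjoint H') (hB : IsSelfAdjoint B)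
    (M : ℝ) (hM : ∀ μ : ℝ, Module.End.HasEigenvalue (↑H' : V →ₗ[ℂ] V) (μ : ℂ) → -M < μ)
    (S : ℝ) (hS : 0 < S)
    (hHad : ∀ s : ℂ, ‖s‖ < S →
      ‖NormedSpace.exp (s • H') * B * NormedSpace.exp (-(s • H'))‖ ≤
        ‖B‖ / (1 - ‖s‖ / S)) :
    ∀ s : ℂ, ‖s‖ < S →
      ‖NormedSpace.exp (s • etrunc H' M) * B * NormedSpace.exp (-(s • etrunc H' M))‖ ≤
        2 * ‖B‖ + ‖B‖ / (1 - ‖s‖ / S) :=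
  stmt_7_general H' B hH' M hM S hHad
end

section
/- Let V be a finite-dimensional complex inner product space, let H and W be self-adjoint linear endomorphisms of V, and let Δ > ‖W‖. Then rank E^{H−W}((−Δ+‖W‖, Δ−‖W‖)) ≤ rank E^H((−Δ, Δ)). -/
theorem Submodule.finrank_le_finrank_of_disjoint_orthogonal {𝕜 E : Type*} [RCLike 𝕜]
    [NormedAddCommGroup E] [InnerProductSpace 𝕜 E] [FiniteDimensional 𝕜 E]
    {K L : Submodule 𝕜 E} (h : Disjoint K Lᗮ) : Module.finrank 𝕜 K ≤ Module.finrank 𝕜 L := by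
  have := Submodule.finrank_add_finrank_le_of_disjoint h
  have := L.finrank_add_finrank_orthogonal
  omega

section

variable {V : Type*} [NormedAddCommGroup V] [InnerProductSpace ℂ V]

local notation "⟪" x ", " y "⟫" => @inner ℂ _ _ x y

noncomputable def spectralSubspace (T : V →ₗ[ℂ] V) (I : Set ℝ) : Submodule ℂ V :=
  ⨆ μ ∈ I, Module.End.eigenspace T (μ : ℂ)

theorem range_specProj [FiniteDimensional ℂ V] (T : V →L[ℂ] V) (I : Set ℝ) :
    LinearMap.range (specProj T I : V →ₗ[ℂ] V) = spectralSubspace (T : V →ₗ[ℂ] V) I :=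
  Submodule.range_starProjection _

namespace LinearMap.IsSymmetric

variable [FiniteDimensional ℂ V] {T : V →ₗ[ℂ] V} (hT : T.IsSymmetric) {S : Set ℝ} {v : V}
include hT

theorem inner_eigenvectorBasis_apply (v : V) (i : Fin (Module.finrank ℂ V)) :
    ⟪hT.eigenvectorBasis rfl i, T v⟫ = hT.eigenvalues rfl i * ⟪hT.eigenvectorBasis rfl i, v⟫ := by
  rw [← hT, hT.apply_eigenvectorBasis, inner_smul_left, RCLike.conj_ofReal]
  rfl

theorem norm_apply_sq_eq_sum (v : V) :
    ‖T v‖ ^ 2 = ∑ i, hT.eigenvalues rfl i ^ 2 * ‖⟪hT.eigenvectorBasis rfl i, v⟫‖ ^ 2 := by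
  simp only [← (hT.eigenvectorBasis rfl).sum_sq_norm_inner_right (T v),
    hT.inner_eigenvectorBasis_apply, norm_mul, mul_pow, Complex.norm_real, Real.norm_eq_abs,
    sq_abs]

theorem inner_eigenvectorBasis_eq_zero_of_mem_spectralSubspace (hv : v ∈ spectralSubspace T S)
    {i : Fin (Module.finrank ℂ V)} (hi : hT.eigenvalues rfl i ∉ S) :
    ⟪hT.eigenvectorBasis rfl i, v⟫ = 0 := by
  have hb := (hT.hasEigenvector_eigenvectorBasis rfl i).1
  have hle : spectralSubspace T S ≤ (ℂ ∙ hT.eigenvectorBasis rfl i)ᗮ := by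
    refine iSup₂_le fun s hs w hw => ?_
    rw [Submodule.mem_orthogonal_singleton_iff_inner_right]
    have hne : (hT.eigenvalues rfl i : ℂ) ≠ s := by
      rw [ne_eq, Complex.ofReal_inj]
      rintro rfl
      exact hi hs
    exact hT.orthogonalFamily_eigenspaces hne ⟨_, hb⟩ ⟨w, hw⟩
  exact Submodule.mem_orthogonal_singleton_iff_inner_right.mp (hle hv)

theorem inner_eigenvectorBasis_eq_zero_of_mem_orthogonal_spectralSubspace
    (hv : v ∈ (spectralSubspace T S)ᗮ) {i : Fin (Module.finrank ℂ V)}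
    (hi : hT.eigenvalues rfl i ∈ S) : ⟪hT.eigenvectorBasis rfl i, v⟫ = 0 := by
  refine Submodule.inner_right_of_mem_orthogonal ?_ hv
  exact Submodule.mem_iSup_of_mem _ (Submodule.mem_iSup_of_mem hi
    (hT.hasEigenvector_eigenvectorBasis rfl i).1)

theorem norm_apply_lt_of_mem_spectralSubspace (hv : v ∈ spectralSubspace T S) (hv0 : v ≠ 0)
    {c : ℝ} (hc : ∀ s ∈ S, |s| < c) : ‖T v‖ < c * ‖v‖ := by
  have hS (i) (hi : ⟪hT.eigenvectorBasis rfl i, v⟫ ≠ 0) : hT.eigenvalues rfl i ∈ S := by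
    by_contra hS
    exact hi (hT.inner_eigenvectorBasis_eq_zero_of_mem_spectralSubspace hv hS)
  have hsq (i) (hi : ⟪hT.eigenvectorBasis rfl i, v⟫ ≠ 0) : hT.eigenvalues rfl i ^ 2 < c ^ 2 :=
    sq_lt_sq' (abs_lt.mp (hc _ (hS i hi))).1 (abs_lt.mp (hc _ (hS i hi))).2
  obtain ⟨j, -, hj⟩ : ∃ j ∈ Finset.univ, ‖⟪hT.eigenvectorBasis rfl j, v⟫‖ ^ 2 ≠ 0 := by
    refine Finset.exists_ne_zero_of_sum_ne_zero ?_
    rw [(hT.eigenvectorBasis rfl).sum_sq_norm_inner_right]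
    exact pow_ne_zero 2 (norm_ne_zero_iff.mpr hv0)
  have hj' : ⟪hT.eigenvectorBasis rfl j, v⟫ ≠ 0 := by simpa using hj
  have hc0 : 0 < c := (abs_nonneg _).trans_lt (hc _ (hS j hj'))
  have key : ‖T v‖ ^ 2 < (c * ‖v‖) ^ 2 := by
    rw [hT.norm_apply_sq_eq_sum, mul_pow, ← (hT.eigenvectorBasis rfl).sum_sq_norm_inner_right,
      Finset.mul_sum]
    refine Finset.sum_lt_sum (fun i _ => ?_) ⟨j, Finset.mem_univ j, ?_⟩
    · by_cases hi : ⟪hT.eigenvectorBasis rfl i, v⟫ = 0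
      · simp [hi]
      · exact mul_le_mul_of_nonneg_right (hsq i hi).le (by positivity)
    · exact mul_lt_mul_of_pos_right (hsq j hj') (by positivity)
  exact lt_of_pow_lt_pow_left₀ 2 (by positivity) key

theorem le_norm_apply_of_mem_orthogonal_spectralSubspace (hv : v ∈ (spectralSubspace T S)ᗮ)
    {c : ℝ} (hc : ∀ s ∉ S, c ≤ |s|) : c * ‖v‖ ≤ ‖T v‖ := by
  obtain hc0 | hc0 := lt_or_ge c 0
  · nlinarith [norm_nonneg v, norm_nonneg (T v)]
  have key : (c * ‖v‖) ^ 2 ≤ ‖T v‖ ^ 2 := by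
    rw [hT.norm_apply_sq_eq_sum, mul_pow, ← (hT.eigenvectorBasis rfl).sum_sq_norm_inner_right,
      Finset.mul_sum]
    refine Finset.sum_le_sum fun i _ => ?_
    by_cases hS : hT.eigenvalues rfl i ∈ S
    · simp [hT.inner_eigenvectorBasis_eq_zero_of_mem_orthogonal_spectralSubspace hv hS]
    · refine mul_le_mul_of_nonneg_right ?_ (by positivity)
      exact sq_le_sq.mpr ((abs_of_nonneg hc0).trans_le (hc _ hS))
  exact le_of_pow_le_pow_left₀ two_ne_zero (norm_nonneg _) key

end LinearMap.IsSymmetric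

theorem disjoint_spectralSubspace_sub_orthogonal_spectralSubspace [FiniteDimensional ℂ V]
    {H W : V →L[ℂ] V} (hH : IsSelfAdjoint H) (hW : IsSelfAdjoint W) (Δ : ℝ) :
    Disjoint (spectralSubspace ((H - W : V →L[ℂ] V) : V →ₗ[ℂ] V) (Set.Ioo (-Δ + ‖W‖) (Δ - ‖W‖)))
      (spectralSubspace (H : V →ₗ[ℂ] V) (Set.Ioo (-Δ) Δ))ᗮ := by
  rw [Submodule.disjoint_def]
  intro v hvE hvF
  by_contra hv0
  have hlt : ‖(H - W) v‖ < (Δ - ‖W‖) * ‖v‖ :=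
    (hH.sub hW).isSymmetric.norm_apply_lt_of_mem_spectralSubspace hvE hv0
      fun s hs => abs_lt.mpr ⟨by linarith [hs.1], hs.2⟩
  have hge : Δ * ‖v‖ ≤ ‖H v‖ :=
    hH.isSymmetric.le_norm_apply_of_mem_orthogonal_spectralSubspace hvF fun s hs => by
      rw [Set.mem_Ioo, not_and_or, not_lt, not_lt] at hs
      rw [le_abs']
      exact hs.imp (fun h => by linarith) id
  have hle : ‖H v‖ ≤ ‖(H - W) v‖ + ‖W‖ * ‖v‖ :=
    calc ‖H v‖ = ‖(H - W) v + W v‖ := by simp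
      _ ≤ ‖(H - W) v‖ + ‖W‖ * ‖v‖ := (norm_add_le _ _).trans (by gcongr; exact W.le_opNorm v)
  linarith

end

theorem stmt_17_general {V : Type*} [NormedAddCommGroup V] [InnerProductSpace ℂ V]
    [FiniteDimensional ℂ V]
    (H W : V →L[ℂ] V) (hH : IsSelfAdjoint H) (hW : IsSelfAdjoint W)
    (Δ : ℝ) :
    Module.finrank ℂ
        (LinearMap.range ((specProj (H - W) (Set.Ioo (-Δ + ‖W‖) (Δ - ‖W‖))) : V →ₗ[ℂ] V)) ≤
      Module.finrank ℂ (LinearMap.range ((specProj H (Set.Ioo (-Δ) Δ)) : V →ₗ[ℂ] V)) := by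
  rw [range_specProj, range_specProj]
  exact Submodule.finrank_le_finrank_of_disjoint_orthogonal
    (disjoint_spectralSubspace_sub_orthogonal_spectralSubspace hH hW Δ)

/-- Rank comparison under a bounded perturbation: for self-adjoint `H, W` with
`Δ > ‖W‖`, `rank E^{H−W}((−Δ+‖W‖, Δ−‖W‖)) ≤ rank E^H((−Δ, Δ))`. -/
theorem stmt_17 {V : Type*} [NormedAddCommGroup V] [InnerProductSpace ℂ V]
    [FiniteDimensional ℂ V]
    (H W : V →L[ℂ] V) (hH : IsSelfAdjoint H) (hW : IsSelfAdjoint W)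
    (Δ : ℝ) (hΔ : ‖W‖ < Δ) :
    Module.finrank ℂ
        (LinearMap.range ((specProj (H - W) (Set.Ioo (-Δ + ‖W‖) (Δ - ‖W‖))) : V →ₗ[ℂ] V)) ≤
      Module.finrank ℂ (LinearMap.range ((specProj H (Set.Ioo (-Δ) Δ)) : V →ₗ[ℂ] V)) :=
  stmt_17_general H W hH hW Δ
end
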